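/- arXiv:2303.15032 — 3 statements merged into one kernel-verified Lean document; each statement's English description precedes it below -/
import Mathlib

section
/- Suppose d = gcd(n,m) = 1. Then depth(S/J_{n,m}^t) = 0 for all integers t ≥ t_0; equivalently, the maximal graded ideal (x_1,…,x_n) is an associated prime of S/J_{n,m}^t for all t ≥ t_0. -/
open MvPolynomial

/-- The `m`-path ideal of the cycle graph of length `n`, as an ideal of
`S = K[x_0, …, x_{n-1}]` (variables indexed by `ZMod n`): it is generated by the
`n` monomials `x_i x_{i+1} ⋯ x_{i+m-1}`, indices taken modulo `n`. -/
noncomputable def cyclePathIdeal (K : Type*) [Field K] (n m : ℕ) :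
    Ideal (MvPolynomial (ZMod n) K) :=
  Ideal.span { p | ∃ i : ZMod n, p = ∏ j ∈ Finset.range m, X (i + (j : ZMod n)) }

/-- The maximal graded ideal `(x_0, …, x_{n-1})` of `K[x_i : i ∈ σ]`. -/
noncomputable def maxIdeal (K : Type*) [Field K] (σ : Type*) :
    Ideal (MvPolynomial σ K) :=
  Ideal.span (Set.range (X : σ → MvPolynomial σ K))

/-- The depth of `S/I` with respect to the maximal graded ideal `(x_0, …, x_{n-1})`:
the maximal length of an `S/I`-regular sequence of elements of the maximal graded ideal. -/
noncomputable def quotDepth {K : Type*} [Field K] {σ : Type*}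
    (I : Ideal (MvPolynomial σ K)) : ℕ :=
  sSup { k : ℕ | ∃ rs : List (MvPolynomial σ K), rs.length = k ∧
    (∀ r ∈ rs, r ∈ maxIdeal K σ) ∧
    RingTheory.Sequence.IsRegular (MvPolynomial σ K ⧸ I) rs }

/-!
Write `J = J_{n,m}` and `m * t₀ = α * n + 1`. The monomial
`u = (x_0 ⋯ x_{n-1})^α · (x_0 ⋯ x_{m-1})^(t - t₀)` has degree `α n + m (t - t₀) = m t - 1`,
so it is not in `J^t`, which is generated in degree `m t`. On the other hand, for every `i` the
monomial `x_i (x_0 ⋯ x_{n-1})^α` is the path of length `α n + 1 = m t₀` starting at `i`, which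
is the product of `t₀` consecutive generators of `J`; hence `x_i u ∈ J^t`. So the class of `u`
in `S/J^t` is a nonzero element killed by the maximal ideal: the maximal ideal is associated,
and it contains no nonzerodivisor of `S/J^t`, so the depth is `0`.
-/

theorem isAssociatedPrime_of_isMaximal {R M : Type*} [CommSemiring R] [AddCommMonoid M]
    [Module R M] {P : Ideal R} (hP : P.IsMaximal) {x : M} (hx : x ≠ 0)
    (hPx : ∀ r ∈ P, r • x = 0) : IsAssociatedPrime P M := by
  have hcolon : P = (⊥ : Submodule R M).colon {x} := by
    refine hP.eq_of_le (fun htop => hx ?_) fun r hr => ?_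
    · simpa using (Submodule.mem_bot R).mp
        (Submodule.mem_colon_singleton.mp (htop ▸ Submodule.mem_top : (1 : R) ∈ _))
    · simpa [Submodule.mem_colon_singleton] using hPx r hr
  exact ⟨hP.isPrime, x, by rw [← hcolon, hP.isPrime.radical]⟩

theorem RingTheory.Sequence.IsWeaklyRegular.eq_nil_of_smul_eq_zero {R M : Type*} [CommRing R]
    [AddCommGroup M] [Module R M] {I : Ideal R} {x : M} (hx : x ≠ 0)
    (hIx : ∀ r ∈ I, r • x = 0) {rs : List R} (hrs : ∀ r ∈ rs, r ∈ I)
    (hreg : IsWeaklyRegular M rs) : rs = [] := by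
  cases rs with
  | nil => rfl
  | cons r rs =>
    have hr : IsSMulRegular M r := ((isWeaklyRegular_cons_iff M r rs).mp hreg).1
    exact absurd (hr (show r • x = r • 0 by rw [hIx r (hrs r List.mem_cons_self), smul_zero])) hx

namespace MvPolynomial

variable {σ R : Type*}

theorem idealOfVars_eq_ker_constantCoeff [CommSemiring R] :
    idealOfVars σ R = RingHom.ker constantCoeff := by
  ext p
  rw [← pow_one (idealOfVars σ R), mem_pow_idealOfVars_iff', RingHom.mem_ker, constantCoeff_eq]
  refine ⟨fun h => h 0 (by simp), fun h d hd => ?_⟩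
  rwa [(Finsupp.degree_eq_zero_iff d).mp (Nat.lt_one_iff.mp hd)]

theorem isMaximal_idealOfVars [Field R] : (idealOfVars σ R).IsMaximal := by
  rw [idealOfVars_eq_ker_constantCoeff]
  exact RingHom.ker_isMaximal_of_surjective _ fun r => ⟨C r, constantCoeff_C σ r⟩

theorem IsHomogeneous.mem_pow_idealOfVars_iff [CommSemiring R] {p : MvPolynomial σ R} {k : ℕ}
    (hp : p.IsHomogeneous k) (hp0 : p ≠ 0) (n : ℕ) : p ∈ idealOfVars σ R ^ n ↔ n ≤ k := by
  have hdeg : ∀ d ∈ p.support, d.degree = k := fun d hd => by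
    rw [Finsupp.degree_eq_weight_one]
    exact hp (mem_support_iff.mp hd)
  rw [MvPolynomial.mem_pow_idealOfVars_iff]
  refine ⟨fun h => ?_, fun h d hd => hdeg d hd ▸ h⟩
  obtain ⟨d, hd⟩ := Finset.nonempty_iff_ne_empty.mpr (mt support_eq_empty.mp hp0)
  exact hdeg d hd ▸ h d hd

end MvPolynomial

section CyclePath

variable (K : Type*) [Field K] {n : ℕ}

noncomputable def cyclePathMonomial (i : ZMod n) (N : ℕ) : MvPolynomial (ZMod n) K :=
  ∏ j ∈ Finset.range N, X (i + (j : ZMod n))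

variable {K}

theorem cyclePathMonomial_add (i : ZMod n) (a b : ℕ) :
    cyclePathMonomial K i (a + b) =
      cyclePathMonomial K i a * cyclePathMonomial K (i + (a : ZMod n)) b := by
  rw [cyclePathMonomial, Finset.prod_range_add]
  refine congrArg _ (Finset.prod_congr rfl fun j _ => ?_)
  rw [Nat.cast_add, add_assoc]

theorem cyclePathMonomial_one (i : ZMod n) : cyclePathMonomial K i 1 = X i := by
  simp [cyclePathMonomial]

theorem cyclePathMonomial_ne_zero (i : ZMod n) (N : ℕ) : cyclePathMonomial K i N ≠ 0 :=
  Finset.prod_ne_zero_iff.mpr fun _ _ => X_ne_zero _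

theorem isHomogeneous_cyclePathMonomial (i : ZMod n) (N : ℕ) :
    (cyclePathMonomial K i N).IsHomogeneous N := by
  unfold cyclePathMonomial
  simpa using IsHomogeneous.prod (Finset.range N) _ (fun _ => 1) fun j _ => isHomogeneous_X K _

theorem prod_cyclePathMonomial (i : ZMod n) (m s : ℕ) :
    ∏ k ∈ Finset.range s, cyclePathMonomial K (i + ((m * k : ℕ) : ZMod n)) m =
      cyclePathMonomial K i (m * s) := by
  induction s with
  | zero => simp [cyclePathMonomial]
  | succ s ih => rw [Finset.prod_range_succ, ih, Nat.mul_succ, cyclePathMonomial_add]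

-- Moving the start by one trades the first factor `x_i` for the last one, `x_{i+N} = x_i`.
theorem cyclePathMonomial_add_one {N : ℕ} (hN : (N : ZMod n) = 0) (i : ZMod n) :
    cyclePathMonomial K (i + 1) N = cyclePathMonomial K i N := by
  refine mul_left_cancel₀ (X_ne_zero i) ?_
  calc X i * cyclePathMonomial K (i + 1) N = cyclePathMonomial K i (1 + N) := by
        rw [cyclePathMonomial_add, cyclePathMonomial_one, Nat.cast_one]
    _ = X i * cyclePathMonomial K i N := by
        rw [add_comm, cyclePathMonomial_add, cyclePathMonomial_one, hN, add_zero, mul_comm]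

theorem cyclePathMonomial_add_intCast {N : ℕ} (hN : (N : ZMod n) = 0) (i : ZMod n) (k : ℤ) :
    cyclePathMonomial K (i + (k : ZMod n)) N = cyclePathMonomial K i N := by
  induction k using Int.induction_on with
  | zero => simp
  | succ k ih => rw [Int.cast_add, Int.cast_one, ← add_assoc, cyclePathMonomial_add_one hN, ih]
  | pred k ih =>
    rw [← ih, ← cyclePathMonomial_add_one hN]
    congr 1
    push_cast
    ring

theorem cyclePathMonomial_eq_of_natCast_eq_zero {N : ℕ} (hN : (N : ZMod n) = 0) (i j : ZMod n) :
    cyclePathMonomial K i N = cyclePathMonomial K j N := by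
  obtain ⟨k, hk⟩ := ZMod.intCast_surjective (j - i)
  rw [← cyclePathMonomial_add_intCast hN i k, hk, add_sub_cancel]

end CyclePath

section CyclePathIdeal

variable {K : Type*} [Field K] {n m : ℕ}

theorem cyclePathMonomial_mem_cyclePathIdeal (i : ZMod n) :
    cyclePathMonomial K i m ∈ cyclePathIdeal K n m :=
  Ideal.subset_span ⟨i, rfl⟩

theorem cyclePathIdeal_pow_le_pow_idealOfVars (t : ℕ) :
    cyclePathIdeal K n m ^ t ≤ idealOfVars (ZMod n) K ^ (m * t) := by
  have h : cyclePathIdeal K n m ≤ idealOfVars (ZMod n) K ^ m := Ideal.span_le.mpr <| by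
    rintro _ ⟨i, rfl⟩
    exact ((isHomogeneous_cyclePathMonomial i m).mem_pow_idealOfVars_iff
      (cyclePathMonomial_ne_zero i m) m).mpr le_rfl
  exact (Ideal.pow_right_mono h t).trans (pow_mul _ m t).ge

theorem exists_notMem_cyclePathIdeal_pow_forall_X_mul_mem {t₀ α t : ℕ}
    (ht₀ : m * t₀ = α * n + 1) (ht : t₀ ≤ t) :
    ∃ u, u ∉ cyclePathIdeal K n m ^ t ∧ ∀ i, X i * u ∈ cyclePathIdeal K n m ^ t := by
  obtain ⟨s, rfl⟩ := Nat.exists_eq_add_of_le ht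
  refine ⟨cyclePathMonomial K 0 (α * n) * cyclePathMonomial K 0 m ^ s, fun hu => ?_, fun i => ?_⟩
  · have hhom := (isHomogeneous_cyclePathMonomial (K := K) (0 : ZMod n) (α * n)).mul
      ((isHomogeneous_cyclePathMonomial 0 m).pow s)
    have hne := mul_ne_zero (cyclePathMonomial_ne_zero (K := K) (0 : ZMod n) (α * n))
      (pow_ne_zero s (cyclePathMonomial_ne_zero 0 m))
    have := (hhom.mem_pow_idealOfVars_iff hne _).mp (cyclePathIdeal_pow_le_pow_idealOfVars _ hu)
    rw [mul_add, ht₀] at this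
    omega
  · have hpath : X i * cyclePathMonomial K 0 (α * n) = cyclePathMonomial K i (m * t₀) := by
      rw [ht₀, add_comm, cyclePathMonomial_add, cyclePathMonomial_one, Nat.cast_one,
        cyclePathMonomial_eq_of_natCast_eq_zero (N := α * n) (by simp) (i + 1) 0]
    rw [← mul_assoc, hpath, ← prod_cyclePathMonomial, pow_add]
    refine Ideal.mul_mem_mul ?_ (Ideal.pow_mem_pow (cyclePathMonomial_mem_cyclePathIdeal 0) _)
    simpa using Ideal.prod_mem_prod (s := Finset.range t₀) (I := fun _ => cyclePathIdeal K n m)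
      fun k _ => cyclePathMonomial_mem_cyclePathIdeal _

end CyclePathIdeal

theorem quotDepth_eq_zero_of_smul_eq_zero {K σ : Type*} [Field K] {I : Ideal (MvPolynomial σ K)}
    {x : MvPolynomial σ K ⧸ I} (hx : x ≠ 0) (hmx : ∀ r ∈ maxIdeal K σ, r • x = 0) :
    quotDepth I = 0 := by
  refine Nat.le_zero.mp (csSup_le' ?_)
  rintro _ ⟨rs, rfl, hrs, hreg⟩
  rw [hreg.toIsWeaklyRegular.eq_nil_of_smul_eq_zero hx hmx hrs, List.length_nil]

theorem depth_eq_zero_of_gcd_eq_one_general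
    (K : Type*) [Field K] (n m : ℕ)
    (hd : Nat.gcd n m = 1) (t0 α : ℕ)
    (ht0 : m * t0 = α * n + Nat.gcd n m)
    (t : ℕ) (ht : t0 ≤ t) :
    quotDepth ((cyclePathIdeal K n m) ^ t) = 0 ∧
    maxIdeal K (ZMod n) ∈ associatedPrimes (MvPolynomial (ZMod n) K)
      (MvPolynomial (ZMod n) K ⧸ (cyclePathIdeal K n m) ^ t) := by
  rw [hd] at ht0
  obtain ⟨u, hu, hXu⟩ := exists_notMem_cyclePathIdeal_pow_forall_X_mul_mem (K := K) ht0 ht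
  set x := Ideal.Quotient.mk (cyclePathIdeal K n m ^ t) u
  have hx : x ≠ 0 := by rwa [Ne, Ideal.Quotient.eq_zero_iff_mem]
  have hcolon : maxIdeal K (ZMod n) ≤ (cyclePathIdeal K n m ^ t).colon {u} :=
    Ideal.span_le.mpr fun _ ⟨i, hi⟩ => hi ▸ Submodule.mem_colon_singleton.mpr (hXu i)
  have hmx : ∀ r ∈ maxIdeal K (ZMod n), r • x = 0 := fun r hr =>
    Ideal.Quotient.eq_zero_iff_mem.mpr (Submodule.mem_colon_singleton.mp (hcolon hr))
  exact ⟨quotDepth_eq_zero_of_smul_eq_zero hx hmx,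
    isAssociatedPrime_of_isMaximal isMaximal_idealOfVars hx hmx⟩

/-- If `d = gcd(n,m) = 1` then `depth(S/J_{n,m}^t) = 0` for all `t ≥ t₀`; equivalently,
the maximal graded ideal is an associated prime of `S/J_{n,m}^t` for all `t ≥ t₀`. -/
theorem depth_eq_zero_of_gcd_eq_one
    (K : Type*) [Field K] (n m : ℕ) (hm : 2 ≤ m) (hmn : m < n)
    (hd : Nat.gcd n m = 1) (t0 α : ℕ) (hα : 0 < α) (ht0le : t0 ≤ n - 1)
    (ht0 : m * t0 = α * n + Nat.gcd n m)
    (ht0max : ∀ s : ℕ, s ≤ n - 1 → (∃ β : ℕ, 0 < β ∧ m * s = β * n + Nat.gcd n m) → s ≤ t0)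
    (t : ℕ) (ht : t0 ≤ t) :
    quotDepth ((cyclePathIdeal K n m) ^ t) = 0 ∧
    maxIdeal K (ZMod n) ∈ associatedPrimes (MvPolynomial (ZMod n) K)
      (MvPolynomial (ZMod n) K ⧸ (cyclePathIdeal K n m) ^ t) :=
  depth_eq_zero_of_gcd_eq_one_general K n m hd t0 α ht0 t ht
end

section
/- Let m, t ≥ 2 be integers and n = mt − 1. Then the colon ideal L = (J_{n,m}^t : x_1 x_2 ⋯ x_{mt−1}) equals the maximal graded ideal (x_1, x_2, …, x_n). -/
/-!
Every generator of `J_{n,m}` is a product of `m` variables, so `J_{n,m}^t` lies in the `mt`-th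
power of the maximal graded ideal, while `u = x_1 ⋯ x_{mt-1}` is a monomial of degree `mt - 1`;
comparing the coefficient of `u` in `f u` shows that `f` has no constant term whenever
`f u ∈ J_{n,m}^t`. Conversely, since `n + 1 = mt`, the monomial `x_i u` is the product of the
`t` consecutive paths of length `m` starting at `x_i`, `x_{i+m}`, …, `x_{i+(t-1)m}`.
-/

open MvPolynomial

open Finset

theorem Finset.prod_range_mul_eq_prod_prod {M : Type*} [CommMonoid M] (f : ℕ → M) (m : ℕ) :
    ∀ t : ℕ, ∏ k ∈ range (t * m), f k = ∏ j ∈ range t, ∏ l ∈ range m, f (j * m + l)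
  | 0 => by simp
  | t + 1 => by
    rw [prod_range_succ, ← prod_range_mul_eq_prod_prod f m t, Nat.succ_mul, prod_range_add]

theorem ZMod.prod_range_natCast {M : Type*} [CommMonoid M] (n : ℕ) [NeZero n] (g : ZMod n → M) :
    ∏ k ∈ range n, g k = ∏ z, g z :=
  prod_nbij' (↑) ZMod.val (fun _ _ ↦ mem_univ _) (fun z _ ↦ mem_range.2 z.val_lt)
    (fun _ hk ↦ ZMod.val_cast_of_lt (mem_range.1 hk)) (fun z _ ↦ ZMod.natCast_zmod_val z)
    (fun _ _ ↦ rfl)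

theorem Ideal.prod_mem_pow_card {R ι : Type*} [CommSemiring R] {I : Ideal R} {s : Finset ι}
    {x : ι → R} (h : ∀ i ∈ s, x i ∈ I) : ∏ i ∈ s, x i ∈ I ^ #s := by
  rw [← prod_const]
  exact Ideal.prod_mem_prod h

namespace MvPolynomial

variable {σ R : Type*} [CommSemiring R]

theorem prod_X_mem_pow_idealOfVars {ι : Type*} (s : Finset ι) (g : ι → σ) :
    ∏ k ∈ s, (X (g k) : MvPolynomial σ R) ∈ idealOfVars σ R ^ #s :=
  Ideal.prod_mem_pow_card fun k _ ↦ Ideal.subset_span ⟨g k, rfl⟩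

theorem prod_X_eq_monomial {ι : Type*} (s : Finset ι) (g : ι → σ) :
    ∏ k ∈ s, (X (g k) : MvPolynomial σ R) = monomial (∑ k ∈ s, Finsupp.single (g k) 1) 1 :=
  (monomial_sum_one s _).symm

theorem degree_sum_single_one {ι : Type*} (s : Finset ι) (g : ι → σ) :
    (∑ k ∈ s, Finsupp.single (g k) 1).degree = #s := by
  simp [Finsupp.degree_single]

theorem colon_span_monomial_le_idealOfVars {I : Ideal (MvPolynomial σ R)} {k : ℕ}
    (hI : I ≤ idealOfVars σ R ^ k) {d : σ →₀ ℕ} (hd : d.degree < k) :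
    I.colon (Ideal.span {monomial d (1 : R)}) ≤ idealOfVars σ R := by
  intro f hf
  rw [Submodule.mem_colon_span_singleton, smul_eq_mul] at hf
  have hconst : coeff 0 f = 0 := by
    simpa [coeff_mul_monomial'] using (mem_pow_idealOfVars_iff' k _).1 (hI hf) d hd
  rw [← pow_one (idealOfVars σ R), mem_pow_idealOfVars_iff']
  intro e he
  obtain rfl : e = 0 := by simpa [Finsupp.degree_eq_zero_iff] using he
  exact hconst

end MvPolynomial

section CyclePath

variable (K : Type*) [Field K]

theorem prod_X_mem_cyclePathIdeal (n m : ℕ) (i : ZMod n) :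
    ∏ j ∈ range m, X (i + (j : ZMod n)) ∈ cyclePathIdeal K n m :=
  Ideal.subset_span ⟨i, rfl⟩

theorem cyclePathIdeal_le_pow_idealOfVars (n m : ℕ) :
    cyclePathIdeal K n m ≤ idealOfVars (ZMod n) K ^ m := by
  rw [cyclePathIdeal, Ideal.span_le]
  rintro _ ⟨i, rfl⟩
  simpa using prod_X_mem_pow_idealOfVars (range m) (fun j : ℕ ↦ i + (j : ZMod n))

theorem X_mul_prod_X_mem_cyclePathIdeal_pow {n m t : ℕ} [NeZero n] (hmt : t * m = n + 1)
    (i : ZMod n) :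
    X i * ∏ k ∈ range n, (X (k : ZMod n) : MvPolynomial (ZMod n) K) ∈
      cyclePathIdeal K n m ^ t := by
  have hcover : X i * ∏ k ∈ range n, (X (k : ZMod n) : MvPolynomial (ZMod n) K) =
      ∏ k ∈ range (t * m), X (i + (k : ZMod n)) := by
    rw [hmt, prod_range_succ, ZMod.natCast_self, add_zero, mul_comm,
      ZMod.prod_range_natCast n (fun z ↦ X (i + z)), ZMod.prod_range_natCast n X]
    exact congrArg (· * X i) (Fintype.prod_equiv (Equiv.addLeft i) _ _ fun _ ↦ rfl).symm
  rw [hcover, prod_range_mul_eq_prod_prod]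
  simpa using Ideal.prod_mem_pow_card fun j (_ : j ∈ range t) ↦ by
    simpa only [Nat.cast_add, Nat.cast_mul, add_assoc] using
      prod_X_mem_cyclePathIdeal K n m (i + (j * m : ℕ))

end CyclePath

/-- For `m, t ≥ 2` and `n = mt - 1`, the colon ideal `(J_{n,m}^t : x_1 x_2 ⋯ x_{mt-1})`
equals the maximal graded ideal `(x_1, …, x_n)`. -/
theorem colon_eq_maxIdeal_of_n_eq_mt_sub_one
    (K : Type*) [Field K] (n m t : ℕ) (hm : 2 ≤ m) (ht : 2 ≤ t) (hn : n = m * t - 1) :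
    ((cyclePathIdeal K n m) ^ t).colon
        (Ideal.span {(∏ k ∈ Finset.range (m * t - 1), X ((k : ℕ) : ZMod n) :
          MvPolynomial (ZMod n) K)}) = maxIdeal K (ZMod n) := by
  have hmt4 : 2 * 2 ≤ m * t := Nat.mul_le_mul hm ht
  have hmt : m * t = n + 1 := by omega
  have : NeZero n := ⟨by omega⟩
  rw [show m * t - 1 = n by omega]
  apply le_antisymm
  · rw [prod_X_eq_monomial]
    refine colon_span_monomial_le_idealOfVars (k := m * t) ?_ ?_
    · rw [pow_mul]
      exact Ideal.pow_right_mono (cyclePathIdeal_le_pow_idealOfVars K n m) t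
    · rw [degree_sum_single_one, card_range]
      omega
  · rw [maxIdeal, Ideal.span_le]
    rintro _ ⟨i, rfl⟩
    rw [SetLike.mem_coe, Submodule.mem_colon_span_singleton, smul_eq_mul]
    exact X_mul_prod_X_mem_cyclePathIdeal_pow K (by rw [mul_comm, hmt]) i
end

section
/- Let m, t ≥ 2 be integers and mt < n ≤ m(t+1). Then the colon ideal L = (J_{n,m}^t : x_1 x_2 ⋯ x_{mt−1}) equals (x_m, x_{2m}, …, x_{mt}, x_n). -/
open MvPolynomial

/-!
Give the variable `x_d` weight `1` if it is one of `x_m, x_{2m}, …, x_{tm}, x_n` and weight `0`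
otherwise. Consecutive weighted indices are at most `m` apart around the cycle (this is where
`n ≤ m(t+1)` enters), so every path generator has weight at least `1` and every monomial of `J^t`
weight at least `t`. Since `mt < n`, the monomial `x_1 ⋯ x_{mt-1}` has weight exactly `t - 1`, so
every monomial of an `f` in the colon ideal has positive weight, i.e. is divisible by a weighted
variable. Conversely, a weighted variable times `x_1 ⋯ x_{mt-1}` is a product of `t` paths of
length `m`.
-/

theorem Finsupp.weight_mono {σ : Type*} {w : σ → ℕ} {s s' : σ →₀ ℕ} (h : s' ≤ s) :
    Finsupp.weight w s' ≤ Finsupp.weight w s := by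
  obtain ⟨d, rfl⟩ := exists_add_of_le h
  simp

namespace MvPolynomial

variable {σ R : Type*} [CommSemiring R]

noncomputable def weightGeIdeal (w : σ → ℕ) (k : ℕ) : Ideal (MvPolynomial σ R) :=
  Ideal.span ((fun s => monomial s 1) '' {s | k ≤ Finsupp.weight w s})

theorem mem_weightGeIdeal_iff {w : σ → ℕ} {k : ℕ} {p : MvPolynomial σ R} :
    p ∈ weightGeIdeal w k ↔ ∀ s ∈ p.support, k ≤ Finsupp.weight w s := by
  rw [weightGeIdeal, mem_ideal_span_monomial_image]
  refine forall₂_congr fun s _ => ⟨?_, fun h => ⟨s, h, le_rfl⟩⟩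
  rintro ⟨s', hs', hle⟩
  exact le_trans hs' (Finsupp.weight_mono hle)

theorem weightGeIdeal_zero (w : σ → ℕ) : weightGeIdeal (R := R) w 0 = ⊤ :=
  eq_top_iff.mpr fun _ _ => mem_weightGeIdeal_iff.mpr fun _ _ => Nat.zero_le _

theorem weightGeIdeal_mul_le (w : σ → ℕ) (a b : ℕ) :
    weightGeIdeal (R := R) w a * weightGeIdeal w b ≤ weightGeIdeal w (a + b) := by
  classical
  refine Ideal.mul_le.mpr fun p hp q hq => mem_weightGeIdeal_iff.mpr fun s hs => ?_
  obtain ⟨x, hx, y, hy, rfl⟩ := Finset.mem_add.mp (support_mul p q hs)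
  rw [map_add]
  exact add_le_add (mem_weightGeIdeal_iff.mp hp x hx) (mem_weightGeIdeal_iff.mp hq y hy)

theorem pow_le_weightGeIdeal {w : σ → ℕ} {I : Ideal (MvPolynomial σ R)}
    (hI : I ≤ weightGeIdeal w 1) (k : ℕ) : I ^ k ≤ weightGeIdeal w k := by
  induction k with
  | zero => simp [weightGeIdeal_zero]
  | succ k ih =>
    rw [pow_succ]
    exact (Ideal.mul_mono ih hI).trans (weightGeIdeal_mul_le w k 1)

theorem weightGeIdeal_colon_monomial (w : σ → ℕ) (k : ℕ) (u : σ →₀ ℕ) :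
    (weightGeIdeal w (k + Finsupp.weight w u)).colon
        (Ideal.span {monomial u (1 : R)} : Set (MvPolynomial σ R)) =
      weightGeIdeal w k := by
  ext p
  rw [Ideal.mem_colon_span_singleton]
  constructor
  · intro h
    refine mem_weightGeIdeal_iff.mpr fun s hs => ?_
    have hsu : s + u ∈ (p * monomial u 1).support := by
      rwa [mem_support_iff, coeff_mul_monomial, mul_one, ← mem_support_iff]
    have := mem_weightGeIdeal_iff.mp h _ hsu
    rw [map_add] at this
    omega
  · intro hp
    have hu : monomial u (1 : R) ∈ weightGeIdeal w (Finsupp.weight w u) :=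
      Ideal.subset_span ⟨u, Set.mem_ofPred.mpr le_rfl, rfl⟩
    exact weightGeIdeal_mul_le w k _ (Ideal.mul_mem_mul hp hu)

theorem span_X_image_eq_weightGeIdeal_one (D : Set σ) :
    Ideal.span (X '' D) = weightGeIdeal (R := R) (D.indicator 1) 1 := by
  ext p
  rw [mem_ideal_span_X_image, mem_weightGeIdeal_iff]
  refine forall₂_congr fun s _ => ?_
  rw [Nat.one_le_iff_ne_zero, Finsupp.weight_apply, Finsupp.sum, Ne, Finset.sum_eq_zero_iff]
  simp only [Finsupp.mem_support_iff, smul_eq_mul, not_forall, exists_prop]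
  refine exists_congr fun i => ?_
  by_cases hi : i ∈ D <;> simp [hi]

end MvPolynomial

section CyclePath

open Finset

variable (K : Type*) [Field K] {n : ℕ}

noncomputable def pathMonomial (s : ZMod n) (ℓ : ℕ) : MvPolynomial (ZMod n) K :=
  ∏ j ∈ range ℓ, X (s + (j : ZMod n))

variable {K}

theorem pathMonomial_add (s : ZMod n) (a b : ℕ) :
    pathMonomial K s (a + b) = pathMonomial K s a * pathMonomial K (s + (a : ZMod n)) b := by
  simp only [pathMonomial, prod_range_add, Nat.cast_add, add_assoc]

theorem pathMonomial_one (s : ZMod n) : pathMonomial K s 1 = X s := by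
  simp [pathMonomial]

theorem pathMonomial_eq_monomial (s : ZMod n) (ℓ : ℕ) :
    pathMonomial K s ℓ =
      monomial (∑ j ∈ range ℓ, Finsupp.single (s + (j : ZMod n)) 1) 1 := by
  rw [monomial_sum_one]
  rfl

theorem pathMonomial_mem_cyclePathIdeal_pow (m : ℕ) (s : ZMod n) (r : ℕ) :
    pathMonomial K s (m * r) ∈ cyclePathIdeal K n m ^ r := by
  induction r with
  | zero => simp [pathMonomial]
  | succ r ih =>
    rw [mul_add_one, pathMonomial_add, pow_succ]
    exact Ideal.mul_mem_mul ih (Ideal.subset_span ⟨_, rfl⟩)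

/-- The indices of the variables `x_m, x_{2m}, …, x_{tm}, x_n` when `x_1, …, x_n` are indexed by
`0, …, n - 1`. -/
def colonIndices (n m t : ℕ) : Set (ZMod n) :=
  {d | (∃ k : ℕ, 1 ≤ k ∧ k ≤ t ∧ d = ((k * m - 1 : ℕ) : ZMod n)) ∨
    d = ((n - 1 : ℕ) : ZMod n)}

variable {m t : ℕ}

theorem exists_add_mem_colonIndices (hn1 : m * t < n) (hn2 : n ≤ m * (t + 1)) (i : ZMod n) :
    ∃ j < m, i + (j : ZMod n) ∈ colonIndices n m t := by
  have : NeZero n := ⟨by omega⟩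
  obtain ⟨a, ha, rfl⟩ : ∃ a < n, (a : ZMod n) = i := ⟨i.val, i.val_lt, i.natCast_zmod_val⟩
  rw [mul_add_one] at hn2
  by_cases hat : a < m * t
  · have hm : 0 < m := Nat.pos_of_ne_zero (by rintro rfl; simp at hat)
    have hq : a / m < t := Nat.div_lt_of_lt_mul hat
    have hdiv := Nat.div_add_mod a m
    have hmod := Nat.mod_lt a hm
    refine ⟨m - 1 - a % m, by omega, Or.inl ⟨a / m + 1, Nat.le_add_left 1 _, hq, ?_⟩⟩
    rw [← Nat.cast_add, add_one_mul, mul_comm]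
    congr 1
    omega
  · refine ⟨n - 1 - a, by omega, Or.inr ?_⟩
    rw [← Nat.cast_add]
    congr 1
    omega

theorem cyclePathIdeal_le_span_X_colonIndices (hn1 : m * t < n) (hn2 : n ≤ m * (t + 1)) :
    cyclePathIdeal K n m ≤ Ideal.span (X '' colonIndices n m t) := by
  rw [cyclePathIdeal, Ideal.span_le]
  rintro _ ⟨i, rfl⟩
  obtain ⟨j, hj, hjD⟩ := exists_add_mem_colonIndices hn1 hn2 i
  have hX : (X (i + (j : ZMod n)) : MvPolynomial (ZMod n) K) ∈
      Ideal.span (X '' colonIndices n m t) :=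
    Ideal.subset_span ⟨_, hjD, rfl⟩
  exact Ideal.mem_of_dvd _ (dvd_prod_of_mem _ (mem_range.mpr hj)) hX

theorem natCast_mem_colonIndices_iff (hm : 0 < m) (hn1 : m * t < n) {j : ℕ} (hj : j < m * t - 1) :
    (j : ZMod n) ∈ colonIndices n m t ↔ m ∣ j + 1 := by
  rw [colonIndices, Set.mem_ofPred_eq]
  have cast_inj {a b : ℕ} (ha : a < n) (hb : b < n) : (a : ZMod n) = b ↔ a = b := by
    rw [ZMod.natCast_eq_natCast_iff', Nat.mod_eq_of_lt ha, Nat.mod_eq_of_lt hb]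
  constructor
  · rintro (⟨k, hk1, hkt, hjk⟩ | hjn)
    · have hkm : k * m ≤ m * t := by rw [mul_comm]; exact Nat.mul_le_mul_left m hkt
      have hkm1 : 1 ≤ k * m := Nat.one_le_iff_ne_zero.mpr (by positivity)
      rw [cast_inj (by omega) (by omega)] at hjk
      exact ⟨k, by rw [mul_comm]; omega⟩
    · rw [cast_inj (by omega) (by omega)] at hjn
      omega
  · rintro ⟨k, hk⟩
    have hkt : k < t := by
      by_contra! h
      have := Nat.mul_le_mul_left m h
      omega
    refine Or.inl ⟨k, Nat.pos_of_ne_zero (by rintro rfl; omega), hkt.le, ?_⟩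
    rw [mul_comm]
    congr 1
    omega

theorem weight_indicator_colonIndices (hm : 0 < m) (hn1 : m * t < n) :
    Finsupp.weight ((colonIndices n m t).indicator 1)
      (∑ j ∈ range (m * t - 1), Finsupp.single ((0 : ZMod n) + (j : ZMod n)) 1) = t - 1 := by
  classical
  simp only [map_sum, Finsupp.weight_single, zero_add, one_smul, Set.indicator_apply,
    Pi.one_apply, sum_boole]
  rw [filter_congr fun j hj => natCast_mem_colonIndices_iff hm hn1 (mem_range.mp hj),
    Nat.card_multiples, Nat.cast_id]
  rcases t with _ | t
  · simp
  · apply Nat.div_eq_of_lt_le <;>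
      simp only [Nat.add_sub_cancel, mul_add_one, add_mul, one_mul, mul_comm t m] <;> omega

theorem X_mul_pathMonomial_mem_cyclePathIdeal_pow (hn : 0 < n) (hm : 0 < m) (ht : 0 < t)
    {d : ZMod n} (hd : d ∈ colonIndices n m t) :
    X d * pathMonomial K 0 (m * t - 1) ∈ cyclePathIdeal K n m ^ t := by
  rcases hd with ⟨k, hk1, hkt, rfl⟩ | rfl
  · rw [mul_comm k m]
    obtain ⟨ℓ, hℓ⟩ : ∃ ℓ, m * k = ℓ + 1 :=
      ⟨m * k - 1, by have := Nat.mul_le_mul hm hk1; omega⟩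
    have hsplit : m * t - 1 = ℓ + m * (t - k) := by
      have : m * k + m * (t - k) = m * t := by rw [← mul_add, Nat.add_sub_cancel' hkt]
      omega
    have hprod : X ((m * k - 1 : ℕ) : ZMod n) * pathMonomial K 0 (m * t - 1) =
        pathMonomial K 0 (m * k) * pathMonomial K (ℓ : ZMod n) (m * (t - k)) := by
      rw [hsplit, hℓ, Nat.add_sub_cancel, pathMonomial_add, pathMonomial_add, pathMonomial_one,
        zero_add]
      ring
    have := Ideal.mul_mem_mul (pathMonomial_mem_cyclePathIdeal_pow (K := K) m 0 k)
      (pathMonomial_mem_cyclePathIdeal_pow m (ℓ : ZMod n) (t - k))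
    rwa [← hprod, ← pow_add, Nat.add_sub_cancel' hkt] at this
  · have hmt : m * t = 1 + (m * t - 1) := by have := Nat.mul_le_mul hm ht; omega
    have hprod : pathMonomial K ((n - 1 : ℕ) : ZMod n) (m * t) =
        X ((n - 1 : ℕ) : ZMod n) * pathMonomial K 0 (m * t - 1) := by
      rw [hmt, pathMonomial_add, pathMonomial_one, Nat.add_sub_cancel_left]
      congr 2
      rw [← Nat.cast_add, Nat.sub_add_cancel hn, ZMod.natCast_self]
    rw [← hprod]
    exact pathMonomial_mem_cyclePathIdeal_pow m _ t

end CyclePath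

theorem colon_eq_of_mt_lt_n_le_general
    (K : Type*) [Field K] (n m t : ℕ) (ht : 2 ≤ t)
    (hn1 : m * t < n) (hn2 : n ≤ m * (t + 1)) :
    ((cyclePathIdeal K n m) ^ t).colon
        (Ideal.span {(∏ k ∈ Finset.range (m * t - 1), X ((k : ℕ) : ZMod n) :
          MvPolynomial (ZMod n) K)}) =
      Ideal.span { p : MvPolynomial (ZMod n) K |
        (∃ k : ℕ, 1 ≤ k ∧ k ≤ t ∧ p = X ((k * m - 1 : ℕ) : ZMod n)) ∨
          p = X ((n - 1 : ℕ) : ZMod n) } := by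
  have hm : 0 < m := Nat.pos_of_ne_zero (by rintro rfl; simp at hn2; omega)
  have hu : ∏ k ∈ Finset.range (m * t - 1), (X ((k : ℕ) : ZMod n) : MvPolynomial (ZMod n) K) =
      pathMonomial K 0 (m * t - 1) := by
    simp [pathMonomial]
  have hgen : { p : MvPolynomial (ZMod n) K |
      (∃ k : ℕ, 1 ≤ k ∧ k ≤ t ∧ p = X ((k * m - 1 : ℕ) : ZMod n)) ∨
        p = X ((n - 1 : ℕ) : ZMod n) } = X '' colonIndices n m t := by
    ext p
    simp [colonIndices, or_and_right, exists_or, eq_comm, and_assoc]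
  rw [hu, hgen]
  refine le_antisymm ?_ ?_
  · set w : ZMod n → ℕ := (colonIndices n m t).indicator 1
    have hcolon := weightGeIdeal_colon_monomial (R := K) w 1
      (∑ j ∈ Finset.range (m * t - 1), Finsupp.single ((0 : ZMod n) + (j : ZMod n)) 1)
    rw [weight_indicator_colonIndices hm hn1, ← pathMonomial_eq_monomial,
      Nat.add_sub_cancel' (by omega)] at hcolon
    have hpow : cyclePathIdeal K n m ^ t ≤ weightGeIdeal w t :=
      pow_le_weightGeIdeal ((cyclePathIdeal_le_span_X_colonIndices hn1 hn2).trans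
        (span_X_image_eq_weightGeIdeal_one _).le) t
    rw [span_X_image_eq_weightGeIdeal_one, ← hcolon]
    exact Submodule.colon_mono hpow subset_rfl
  · rw [Ideal.span_le]
    rintro _ ⟨d, hd, rfl⟩
    exact Ideal.mem_colon_span_singleton.mpr
      (X_mul_pathMonomial_mem_cyclePathIdeal_pow (by omega) hm (by omega) hd)

/-- For `m, t ≥ 2` and `mt < n ≤ m(t+1)`, the colon ideal `(J_{n,m}^t : x_1 x_2 ⋯ x_{mt-1})`
equals `(x_m, x_{2m}, …, x_{mt}, x_n)`. -/
theorem colon_eq_of_mt_lt_n_le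
    (K : Type*) [Field K] (n m t : ℕ) (hm : 2 ≤ m) (ht : 2 ≤ t)
    (hn1 : m * t < n) (hn2 : n ≤ m * (t + 1)) :
    ((cyclePathIdeal K n m) ^ t).colon
        (Ideal.span {(∏ k ∈ Finset.range (m * t - 1), X ((k : ℕ) : ZMod n) :
          MvPolynomial (ZMod n) K)}) =
      Ideal.span { p : MvPolynomial (ZMod n) K |
        (∃ k : ℕ, 1 ≤ k ∧ k ≤ t ∧ p = X ((k * m - 1 : ℕ) : ZMod n)) ∨
          p = X ((n - 1 : ℕ) : ZMod n) } :=
  colon_eq_of_mt_lt_n_le_general K n m t ht hn1 hn2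
end
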